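/- Suppose r, t ∈ {0,1} and the unknown response probabilities satisfy q_{r1}(x,u) ∈ [B̲_r(x,u), B̄_r(x,u)] on the no-overlap region. With τ(x,u) = μ_1(x,u) − μ_0(x,u), ΔB_r(x,u) = B̄_r(x,u) − B̲_r(x,u), B^mid_r = B̲_r + ΔB_r/2, and c_1(π) = Σ_r E[τ π_r B^mid_r 1{X∈𝒳^nov}], the robust resource-parity-constrained problem (maximizing the worst-case policy value subject to the take-up parity constraint holding for all response functions in the box uncertainty set) is equivalent to the linear program: maximize V_ov(π) + E[μ_0] + c_1(π) − (1/2) Σ_r E[ |τ| π_r ΔB_r(X,A) 1{X ∈ 𝒳^nov} ] subject to Σ_r { E[π_r B̄_r(X,A) 1{X∈𝒳^nov} | A=a] − E[π_r B̲_r(X,A) 1{X∈𝒳^nov} | A=b] } + Δ_ov^T(π) ≤ ε. -/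

import Mathlib

open MeasureTheory

private lemma abs4_bound (a b c d A B C D : ℝ) (ha : |a| ≤ A) (hb : |b| ≤ B)
    (hc : |c| ≤ C) (hd : |d| ≤ D) : |a * b * c * d| ≤ A * B * C * D := by
  have hA : 0 ≤ A := le_trans (abs_nonneg a) ha
  have hB : 0 ≤ B := le_trans (abs_nonneg b) hb
  have hC : 0 ≤ C := le_trans (abs_nonneg c) hc
  rw [abs_mul, abs_mul, abs_mul]
  exact mul_le_mul (mul_le_mul (mul_le_mul ha hb (abs_nonneg _) hA) hc
    (abs_nonneg _) (mul_nonneg hA hB)) hd (abs_nonneg _)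
    (mul_nonneg (mul_nonneg hA hB) hC)

/-- Proposition: robust linear program.
With binary `r, t` and response probabilities `q_{r1}(x,u)` only known to lie in the box
`[B̲_r(x,u), B̄_r(x,u)]` on the no-overlap region, the robust resource-parity-constrained
program (maximize the worst-case policy value subject to the take-up parity constraint
holding for every response function in the box) is equivalent to a linear program:
the worst-case value equals
`V_ov(π) + E[μ₀] + c₁(π) − ½ ∑_r E[|τ| π_r ΔB_r 1{X∈𝒳ⁿᵒᵛ}]`,
and robust feasibility is equivalent to
`∑_r { E[π_r B̄_r 1{nov} ∣ A=a] − E[π_r B̲_r 1{nov} ∣ A=b] } + Δ_ov^T(π) ≤ ε`. -/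
theorem robust_linear_program
    {Ω 𝒳 : Type*} [MeasurableSpace Ω] [MeasurableSpace 𝒳]
    (μ : Measure Ω) [IsProbabilityMeasure μ]
    (X : Ω → 𝒳) (A : Ω → Bool) (hX : Measurable X) (hA : Measurable A)
    -- nuisances on the overlap region:  p t r = p_{t∣r}(x,u),  m t = μ_t(x,u)
    (p : Fin 2 → Fin 2 → 𝒳 → Bool → ℝ) (m : Fin 2 → 𝒳 → Bool → ℝ)
    (hpm : ∀ t r : Fin 2, Measurable (fun o : 𝒳 × Bool => p t r o.1 o.2)
        ∧ Measurable (fun o : 𝒳 × Bool => m t o.1 o.2))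
    (Cb : ℝ) (hCb : ∀ (t r : Fin 2) x u, |p t r x u| ≤ Cb ∧ |m t x u| ≤ Cb)
    -- τ(x,u) = μ₁(x,u) − μ₀(x,u)
    (τ : 𝒳 → Bool → ℝ) (hτ : ∀ x u, τ x u = m 1 x u - m 0 x u)
    -- no-overlap region
    (nov : Set 𝒳) (hnov : MeasurableSet nov)
    -- group probabilities
    (pA : Bool → ℝ) (hpA : ∀ u, pA u = (μ {ω | A ω = u}).toReal) (hpApos : ∀ u, 0 < pA u)
    -- policy (π r x u = probability of recommendation r), valid
    (π : Fin 2 → 𝒳 → Bool → ℝ)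
    (hπmeas : ∀ r, Measurable fun o : 𝒳 × Bool => π r o.1 o.2)
    (hπnonneg : ∀ r x u, 0 ≤ π r x u) (hπsum : ∀ x u, ∑ r : Fin 2, π r x u = 1)
    -- box bounds for the ambiguous q_{r1}, and derived quantities
    (Blo Bhi : Fin 2 → 𝒳 → Bool → ℝ)
    (hBmeas : ∀ r, Measurable (fun o : 𝒳 × Bool => Blo r o.1 o.2)
        ∧ Measurable (fun o : 𝒳 × Bool => Bhi r o.1 o.2))
    (hBb : ∀ (r : Fin 2) x u, |Blo r x u| ≤ Cb ∧ |Bhi r x u| ≤ Cb)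
    (hBle : ∀ (r : Fin 2) x u, Blo r x u ≤ Bhi r x u)
    -- the box uncertainty set 𝒰_bnd
    (Box : Set (Fin 2 → 𝒳 → Bool → ℝ))
    (hBox : Box = {q | (∀ (r : Fin 2) (x : 𝒳) (u : Bool),
          x ∈ nov → Blo r x u ≤ q r x u ∧ q r x u ≤ Bhi r x u)
        ∧ (∀ (r : Fin 2) (x : 𝒳) (u : Bool), |q r x u| ≤ Cb)
        ∧ (∀ r : Fin 2, Measurable fun o : 𝒳 × Bool => q r o.1 o.2)})
    -- overlap-region value V_ov(π)
    (Vov : ℝ)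
    (hVov : Vov = ∑ t : Fin 2, ∑ r : Fin 2, ∫ ω,
      π r (X ω) (A ω) * p t r (X ω) (A ω) * m t (X ω) (A ω)
        * novᶜ.indicator (fun _ => (1 : ℝ)) (X ω) ∂μ)
    -- total (worst-case-relevant) value of the policy for response model q
    (Val : (Fin 2 → 𝒳 → Bool → ℝ) → ℝ)
    (hVal : ∀ q, Val q = Vov + (∫ ω, m 0 (X ω) (A ω) ∂μ)
      + ∑ r : Fin 2, ∫ ω, τ (X ω) (A ω) * π r (X ω) (A ω) * q r (X ω) (A ω)
          * nov.indicator (fun _ => (1 : ℝ)) (X ω) ∂μ)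
    -- group-conditional expectations  E[· ∣ A = u]
    (condE : Bool → (Ω → ℝ) → ℝ)
    (hcondE : ∀ u f, condE u f = (∫ ω, (if A ω = u then f ω else 0) ∂μ) / pA u)
    -- overlap-region take-up disparity Δ_ov^T(π)
    (ΔovT : ℝ)
    (hΔovT : ΔovT =
      condE true (fun ω => (∑ r : Fin 2, π r (X ω) (A ω) * p 1 r (X ω) (A ω))
          * novᶜ.indicator (fun _ => (1 : ℝ)) (X ω))
      - condE false (fun ω => (∑ r : Fin 2, π r (X ω) (A ω) * p 1 r (X ω) (A ω))
          * novᶜ.indicator (fun _ => (1 : ℝ)) (X ω)))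
    (ε : ℝ) :
    -- (i) the worst-case objective over the box equals the linear-program objective
    (sInf (Val '' Box)
      = Vov + (∫ ω, m 0 (X ω) (A ω) ∂μ)
        + (∑ r : Fin 2, ∫ ω, τ (X ω) (A ω) * π r (X ω) (A ω)
            * (Blo r (X ω) (A ω) + (Bhi r (X ω) (A ω) - Blo r (X ω) (A ω)) / 2)
            * nov.indicator (fun _ => (1 : ℝ)) (X ω) ∂μ)
        - (1 / 2) * ∑ r : Fin 2, ∫ ω, |τ (X ω) (A ω)| * π r (X ω) (A ω)
            * (Bhi r (X ω) (A ω) - Blo r (X ω) (A ω))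
            * nov.indicator (fun _ => (1 : ℝ)) (X ω) ∂μ)
    -- (ii) robust feasibility of the parity constraint is the linear constraint
    ∧ ((∀ q ∈ Box,
        (∑ r : Fin 2, condE true (fun ω => π r (X ω) (A ω) * q r (X ω) (A ω)
            * nov.indicator (fun _ => (1 : ℝ)) (X ω)))
        - (∑ r : Fin 2, condE false (fun ω => π r (X ω) (A ω) * q r (X ω) (A ω)
            * nov.indicator (fun _ => (1 : ℝ)) (X ω)))
        + ΔovT ≤ ε)
      ↔ (∑ r : Fin 2,
          (condE true (fun ω => π r (X ω) (A ω) * Bhi r (X ω) (A ω)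
              * nov.indicator (fun _ => (1 : ℝ)) (X ω))
            - condE false (fun ω => π r (X ω) (A ω) * Blo r (X ω) (A ω)
              * nov.indicator (fun _ => (1 : ℝ)) (X ω))))
          + ΔovT ≤ ε) := by

  classical
  -- basic setup
  have hZ : Measurable fun ω => (X ω, A ω) := hX.prodMk hA
  have hΩ : Nonempty Ω := by
    by_contra h
    rw [not_nonempty_iff] at h
    have h1 : (μ Set.univ) = 1 := measure_univ
    rw [Set.univ_eq_empty_iff.mpr h, measure_empty] at h1
    exact zero_ne_one h1
  obtain ⟨ω₀⟩ := hΩ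
  have hCb0 : 0 ≤ Cb := le_trans (abs_nonneg _) (hCb 0 0 (X ω₀) (A ω₀)).2
  have hτm : Measurable fun o : 𝒳 × Bool => τ o.1 o.2 := by
    have : (fun o : 𝒳 × Bool => τ o.1 o.2)
        = fun o : 𝒳 × Bool => m 1 o.1 o.2 - m 0 o.1 o.2 := by
      funext o; exact hτ o.1 o.2
    rw [this]; exact (hpm 1 0).2.sub (hpm 0 0).2
  have hτb : ∀ x u, |τ x u| ≤ 2 * Cb := by
    intro x u
    rw [hτ]
    calc |m 1 x u - m 0 x u| ≤ |m 1 x u| + |m 0 x u| := abs_sub _ _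
      _ ≤ Cb + Cb := add_le_add (hCb 1 0 x u).2 (hCb 0 0 x u).2
      _ = 2 * Cb := by ring
  have hπ01 : ∀ (r : Fin 2) x u, |π r x u| ≤ 1 := by
    intro r x u
    have h2 : π 0 x u + π 1 x u = 1 := by
      simpa [Fin.sum_univ_two] using hπsum x u
    have h0 := hπnonneg 0 x u
    have h1 := hπnonneg 1 x u
    fin_cases r
    · show |π 0 x u| ≤ 1
      rw [abs_of_nonneg h0]; linarith
    · show |π 1 x u| ≤ 1
      rw [abs_of_nonneg h1]; linarith
  have hindb : ∀ x : 𝒳, |nov.indicator (fun _ => (1:ℝ)) x| ≤ 1 := by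
    intro x; by_cases h : x ∈ nov <;> simp [h]
  have hindm : Measurable fun o : 𝒳 × Bool => nov.indicator (fun _ => (1:ℝ)) o.1 :=
    (measurable_const.indicator hnov).comp measurable_fst
  have intgr : ∀ f : Ω → ℝ, Measurable f → ∀ C : ℝ, (∀ ω, |f ω| ≤ C) →
      Integrable f μ := by
    intro f hf C hC
    exact (integrable_const C).mono' hf.aestronglyMeasurable
      (Filter.Eventually.of_forall fun ω => by
        simpa [Real.norm_eq_abs] using hC ω)
  -- integrability of the main integrands
  have intmain : ∀ (g : Fin 2 → 𝒳 → Bool → ℝ),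
      (∀ r, Measurable fun o : 𝒳 × Bool => g r o.1 o.2) →
      (∀ (r : Fin 2) x u, |g r x u| ≤ Cb) → ∀ r : Fin 2,
      Integrable (fun ω => τ (X ω) (A ω) * π r (X ω) (A ω) * g r (X ω) (A ω)
        * nov.indicator (fun _ => (1:ℝ)) (X ω)) μ := by
    intro g hgm hgb r
    refine intgr _ ?_ (2 * Cb * 1 * Cb * 1) ?_
    · exact ((((hτm.comp hZ).mul ((hπmeas r).comp hZ)).mul
        ((hgm r).comp hZ)).mul ((measurable_const.indicator hnov).comp hX))
    · intro ω
      exact abs4_bound _ _ _ _ _ _ _ _ (hτb _ _) (hπ01 _ _ _) (hgb _ _ _) (hindb _)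
  -- pointwise minimizer of the inner problem
  set qs : Fin 2 → 𝒳 → Bool → ℝ :=
    fun r x u => if 0 ≤ τ x u then Blo r x u else Bhi r x u with hqs
  have hqsm : ∀ r : Fin 2, Measurable fun o : 𝒳 × Bool => qs r o.1 o.2 := by
    intro r
    exact Measurable.ite (measurableSet_le measurable_const hτm)
      (hBmeas r).1 (hBmeas r).2
  have hqsb : ∀ (r : Fin 2) x u, |qs r x u| ≤ Cb := by
    intro r x u
    by_cases h : 0 ≤ τ x u <;> simp only [hqs, h, if_true, if_false]
    · exact (hBb r x u).1
    · exact (hBb r x u).2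
  have hqsBox : qs ∈ Box := by
    rw [hBox]
    refine ⟨fun r x u _ => ?_, hqsb, hqsm⟩
    by_cases h : 0 ≤ τ x u <;>
      simp only [hqs, h, if_true, if_false] <;>
      exact ⟨le_refl _ |>.trans (by first | rfl | exact hBle r x u),
        by first | exact hBle r x u | rfl⟩
  -- pointwise optimality: τ π qs ≤ τ π q for q in the box
  have hptmin : ∀ (q : Fin 2 → 𝒳 → Bool → ℝ), q ∈ Box → ∀ (r : Fin 2) (ω : Ω),
      τ (X ω) (A ω) * π r (X ω) (A ω) * qs r (X ω) (A ω)
        * nov.indicator (fun _ => (1:ℝ)) (X ω)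
      ≤ τ (X ω) (A ω) * π r (X ω) (A ω) * q r (X ω) (A ω)
        * nov.indicator (fun _ => (1:ℝ)) (X ω) := by
    intro q hq r ω
    rw [hBox] at hq
    by_cases hx : X ω ∈ nov
    · have hb := hq.1 r (X ω) (A ω) hx
      rw [Set.indicator_of_mem hx]
      simp only [mul_one]
      by_cases h : 0 ≤ τ (X ω) (A ω)
      · simp only [hqs, h, if_true]
        rw [mul_assoc, mul_assoc]
        exact mul_le_mul_of_nonneg_left
          (mul_le_mul_of_nonneg_left hb.1 (hπnonneg r _ _)) h
      · simp only [hqs, h, if_false]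
        push_neg at h
        rw [mul_assoc, mul_assoc]
        have h2 : π r (X ω) (A ω) * Bhi r (X ω) (A ω)
            ≥ π r (X ω) (A ω) * q r (X ω) (A ω) :=
          mul_le_mul_of_nonneg_left hb.2 (hπnonneg r _ _)
        exact mul_le_mul_of_nonpos_left h2 h.le
    · rw [Set.indicator_of_notMem hx]
      simp
  -- Part (i)
  have part1 : sInf (Val '' Box)
      = Vov + (∫ ω, m 0 (X ω) (A ω) ∂μ)
        + (∑ r : Fin 2, ∫ ω, τ (X ω) (A ω) * π r (X ω) (A ω)
            * (Blo r (X ω) (A ω) + (Bhi r (X ω) (A ω) - Blo r (X ω) (A ω)) / 2)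
            * nov.indicator (fun _ => (1 : ℝ)) (X ω) ∂μ)
        - (1 / 2) * ∑ r : Fin 2, ∫ ω, |τ (X ω) (A ω)| * π r (X ω) (A ω)
            * (Bhi r (X ω) (A ω) - Blo r (X ω) (A ω))
            * nov.indicator (fun _ => (1 : ℝ)) (X ω) ∂μ := by
    have hleast : IsLeast (Val '' Box) (Val qs) := by
      constructor
      · exact ⟨qs, hqsBox, rfl⟩
      · rintro y ⟨q, hq, rfl⟩
        rw [hVal, hVal]
        have hqP := hq
        rw [hBox] at hqP
        refine add_le_add le_rfl (Finset.sum_le_sum fun r _ => ?_)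
        exact integral_mono (intmain qs hqsm hqsb r)
          (intmain q hqP.2.2 hqP.2.1 r) (hptmin q hq r)
    rw [hleast.csInf_eq]
    rw [hVal]
    -- identify Val qs with the linear objective
    have hmid : ∀ r : Fin 2,
        Integrable (fun ω => τ (X ω) (A ω) * π r (X ω) (A ω)
          * (Blo r (X ω) (A ω) + (Bhi r (X ω) (A ω) - Blo r (X ω) (A ω)) / 2)
          * nov.indicator (fun _ => (1:ℝ)) (X ω)) μ := by
      intro r
      refine intmain (fun r x u => Blo r x u + (Bhi r x u - Blo r x u) / 2)
        (fun r => ?_) (fun r x u => ?_) r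
      · exact (hBmeas r).1.add (((hBmeas r).2.sub (hBmeas r).1).div_const 2)
      · have h1 := (hBb r x u).1
        have h2 := (hBb r x u).2
        rw [abs_le] at h1 h2 ⊢
        constructor <;> [linarith; linarith]
    have hdel : ∀ r : Fin 2,
        Integrable (fun ω => |τ (X ω) (A ω)| * π r (X ω) (A ω)
          * (Bhi r (X ω) (A ω) - Blo r (X ω) (A ω))
          * nov.indicator (fun _ => (1:ℝ)) (X ω)) μ := by
      intro r
      refine intgr _ ?_ (2 * Cb * 1 * (2 * Cb) * 1) ?_
      · exact ((((hτm.comp hZ).abs.mul ((hπmeas r).comp hZ)).mul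
          (((hBmeas r).2.sub (hBmeas r).1).comp hZ)).mul
          ((measurable_const.indicator hnov).comp hX))
      · intro ω
        refine abs4_bound _ _ _ _ _ _ _ _ (by rw [abs_abs]; exact hτb _ _)
          (hπ01 _ _ _) ?_ (hindb _)
        calc |Bhi r (X ω) (A ω) - Blo r (X ω) (A ω)|
            ≤ |Bhi r (X ω) (A ω)| + |Blo r (X ω) (A ω)| := abs_sub _ _
          _ ≤ Cb + Cb := add_le_add (hBb r _ _).2 (hBb r _ _).1
          _ = 2 * Cb := by ring
    have key : (∑ r : Fin 2, ∫ ω, τ (X ω) (A ω) * π r (X ω) (A ω)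
            * (Blo r (X ω) (A ω) + (Bhi r (X ω) (A ω) - Blo r (X ω) (A ω)) / 2)
            * nov.indicator (fun _ => (1 : ℝ)) (X ω) ∂μ)
        - (1 / 2) * ∑ r : Fin 2, ∫ ω, |τ (X ω) (A ω)| * π r (X ω) (A ω)
            * (Bhi r (X ω) (A ω) - Blo r (X ω) (A ω))
            * nov.indicator (fun _ => (1 : ℝ)) (X ω) ∂μ
        = ∑ r : Fin 2, ∫ ω, τ (X ω) (A ω) * π r (X ω) (A ω) * qs r (X ω) (A ω)
            * nov.indicator (fun _ => (1 : ℝ)) (X ω) ∂μ := by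
      rw [Finset.mul_sum, ← Finset.sum_sub_distrib]
      refine Finset.sum_congr rfl fun r _ => ?_
      rw [← integral_const_mul, ← integral_sub (hmid r) ((hdel r).const_mul _)]
      refine integral_congr_ae (Filter.Eventually.of_forall fun ω => ?_)
      show _ - _ = _
      by_cases hx : X ω ∈ nov
      · simp only [Set.indicator_of_mem hx]
        by_cases h : 0 ≤ τ (X ω) (A ω)
        · simp only [hqs, h, if_true]
          rw [abs_of_nonneg h]; ring
        · simp only [hqs, h, if_false]
          push_neg at h
          rw [abs_of_neg h]; ring
      · simp only [Set.indicator_of_notMem hx]; ring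
    linarith [key]
  refine ⟨part1, ?_⟩
  -- Part (ii)
  -- integrability of the conditional integrands
  have intcond : ∀ (u : Bool) (g : Fin 2 → 𝒳 → Bool → ℝ),
      (∀ r, Measurable fun o : 𝒳 × Bool => g r o.1 o.2) →
      (∀ (r : Fin 2) x u, |g r x u| ≤ Cb) → ∀ r : Fin 2,
      Integrable (fun ω => if A ω = u then π r (X ω) (A ω) * g r (X ω) (A ω)
        * nov.indicator (fun _ => (1:ℝ)) (X ω) else 0) μ := by
    intro u g hgm hgb r
    refine intgr _ ?_ (1 * Cb * 1) ?_
    · refine Measurable.ite (hA (measurableSet_singleton u)) ?_ measurable_const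
      exact (((hπmeas r).comp hZ).mul ((hgm r).comp hZ)).mul
        ((measurable_const.indicator hnov).comp hX)
    · intro ω
      by_cases h : A ω = u
      · rw [if_pos h]
        have := abs4_bound 1 (π r (X ω) (A ω)) (g r (X ω) (A ω))
          (nov.indicator (fun _ => (1:ℝ)) (X ω)) 1 1 Cb 1
          (by simp) (hπ01 _ _ _) (hgb _ _ _) (hindb _)
        calc |π r (X ω) (A ω) * g r (X ω) (A ω)
              * nov.indicator (fun _ => (1:ℝ)) (X ω)|
            = |1 * π r (X ω) (A ω) * g r (X ω) (A ω)
              * nov.indicator (fun _ => (1:ℝ)) (X ω)| := by rw [one_mul]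
          _ ≤ 1 * 1 * Cb * 1 := this
          _ = 1 * Cb * 1 := by ring
      · rw [if_neg h, abs_zero]
        nlinarith
  -- monotonicity of condE in the integrand, pointwise on the group
  have condE_mono : ∀ (u : Bool) (f g : Ω → ℝ),
      Integrable (fun ω => if A ω = u then f ω else 0) μ →
      Integrable (fun ω => if A ω = u then g ω else 0) μ →
      (∀ ω, A ω = u → f ω ≤ g ω) → condE u f ≤ condE u g := by
    intro u f g hf hg hfg
    rw [hcondE, hcondE]
    gcongr
    · exact le_of_lt (hpApos u)
    · refine fun ω => ?_
      by_cases h : A ω = u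
      · simp only [h, if_true]; exact hfg ω h
      · simp [h]
  -- the extremal q for the constraint
  set qd : Fin 2 → 𝒳 → Bool → ℝ :=
    fun r x u => if u then Bhi r x u else Blo r x u with hqd
  have hqdm : ∀ r : Fin 2, Measurable fun o : 𝒳 × Bool => qd r o.1 o.2 := by
    intro r
    have : MeasurableSet {o : 𝒳 × Bool | o.2 = true} :=
      measurable_snd (measurableSet_singleton true)
    exact Measurable.ite (by simpa using this) (hBmeas r).2 (hBmeas r).1
  have hqdb : ∀ (r : Fin 2) x u, |qd r x u| ≤ Cb := by
    intro r x u
    cases u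
    · simpa only [hqd, Bool.false_eq_true, if_false] using (hBb r x false).1
    · simpa only [hqd, if_true] using (hBb r x true).2
  have hqdBox : qd ∈ Box := by
    rw [hBox]
    refine ⟨fun r x u _ => ?_, hqdb, hqdm⟩
    cases u
    · simp only [hqd, Bool.false_eq_true, if_false]
      exact ⟨le_refl _, hBle r x false⟩
    · simp only [hqd, if_true]
      exact ⟨hBle r x true, le_refl _⟩
  -- condE at qd equals condE at Bhi / Blo respectively
  have hqdtrue : ∀ r : Fin 2,
      condE true (fun ω => π r (X ω) (A ω) * qd r (X ω) (A ω)
        * nov.indicator (fun _ => (1:ℝ)) (X ω))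
      = condE true (fun ω => π r (X ω) (A ω) * Bhi r (X ω) (A ω)
        * nov.indicator (fun _ => (1:ℝ)) (X ω)) := by
    intro r
    rw [hcondE, hcondE]
    congr 1
    refine integral_congr_ae (Filter.Eventually.of_forall fun ω => ?_)
    by_cases h : A ω = true <;> simp [h, hqd]
  have hqdfalse : ∀ r : Fin 2,
      condE false (fun ω => π r (X ω) (A ω) * qd r (X ω) (A ω)
        * nov.indicator (fun _ => (1:ℝ)) (X ω))
      = condE false (fun ω => π r (X ω) (A ω) * Blo r (X ω) (A ω)
        * nov.indicator (fun _ => (1:ℝ)) (X ω)) := by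
    intro r
    rw [hcondE, hcondE]
    congr 1
    refine integral_congr_ae (Filter.Eventually.of_forall fun ω => ?_)
    by_cases h : A ω = false <;> simp [h, hqd]
  constructor
  · intro hall
    have h1 := hall qd hqdBox
    calc (∑ r : Fin 2,
          (condE true (fun ω => π r (X ω) (A ω) * Bhi r (X ω) (A ω)
              * nov.indicator (fun _ => (1 : ℝ)) (X ω))
            - condE false (fun ω => π r (X ω) (A ω) * Blo r (X ω) (A ω)
              * nov.indicator (fun _ => (1 : ℝ)) (X ω)))) + ΔovT
        = (∑ r : Fin 2, condE true (fun ω => π r (X ω) (A ω) * qd r (X ω) (A ω)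
            * nov.indicator (fun _ => (1 : ℝ)) (X ω)))
          - (∑ r : Fin 2, condE false (fun ω => π r (X ω) (A ω) * qd r (X ω) (A ω)
            * nov.indicator (fun _ => (1 : ℝ)) (X ω))) + ΔovT := by
          rw [← Finset.sum_sub_distrib]
          congr 1
          refine Finset.sum_congr rfl fun r _ => ?_
          rw [hqdtrue r, hqdfalse r]
      _ ≤ ε := h1
  · intro hlin q hq
    have hqP := hq
    rw [hBox] at hqP
    have hle1 : ∀ r : Fin 2,
        condE true (fun ω => π r (X ω) (A ω) * q r (X ω) (A ω)
          * nov.indicator (fun _ => (1:ℝ)) (X ω))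
        ≤ condE true (fun ω => π r (X ω) (A ω) * Bhi r (X ω) (A ω)
          * nov.indicator (fun _ => (1:ℝ)) (X ω)) := by
      intro r
      refine condE_mono true _ _ (intcond true q hqP.2.2 hqP.2.1 r)
        (intcond true Bhi (fun r => (hBmeas r).2) (fun r x u => (hBb r x u).2) r)
        (fun ω _ => ?_)
      by_cases hx : X ω ∈ nov
      · rw [Set.indicator_of_mem hx]
        simp only [mul_one]
        exact mul_le_mul_of_nonneg_left (hqP.1 r (X ω) (A ω) hx).2 (hπnonneg r _ _)
      · rw [Set.indicator_of_notMem hx]; simp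
    have hle2 : ∀ r : Fin 2,
        condE false (fun ω => π r (X ω) (A ω) * Blo r (X ω) (A ω)
          * nov.indicator (fun _ => (1:ℝ)) (X ω))
        ≤ condE false (fun ω => π r (X ω) (A ω) * q r (X ω) (A ω)
          * nov.indicator (fun _ => (1:ℝ)) (X ω)) := by
      intro r
      refine condE_mono false _ _
        (intcond false Blo (fun r => (hBmeas r).1) (fun r x u => (hBb r x u).1) r)
        (intcond false q hqP.2.2 hqP.2.1 r) (fun ω _ => ?_)
      by_cases hx : X ω ∈ nov
      · rw [Set.indicator_of_mem hx]
        simp only [mul_one]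
        exact mul_le_mul_of_nonneg_left (hqP.1 r (X ω) (A ω) hx).1 (hπnonneg r _ _)
      · rw [Set.indicator_of_notMem hx]; simp
    have hsum1 := Finset.sum_le_sum (fun r (_ : r ∈ Finset.univ) => hle1 r)
    have hsum2 := Finset.sum_le_sum (fun r (_ : r ∈ Finset.univ) => hle2 r)
    have := Finset.sum_sub_distrib (s := (Finset.univ : Finset (Fin 2)))
      (f := fun r => condE true (fun ω => π r (X ω) (A ω) * Bhi r (X ω) (A ω)
              * nov.indicator (fun _ => (1 : ℝ)) (X ω)))
      (g := fun r => condE false (fun ω => π r (X ω) (A ω) * Blo r (X ω) (A ω)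
              * nov.indicator (fun _ => (1 : ℝ)) (X ω)))
    linarith [hlin]
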